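/- For c ∈ ℂ with c ≠ 0, define F_c : ℂ → ℝ by F_c(v) := max over the three α ∈ ℂ with α³ = c of 2·Re(α·v), and define the inner product g(w,v) := 2·|c|^{2/3}·Re(w·conj(v)) on ℂ ≅ ℝ². Then for every w ∈ ℂ: sSup {g(w,v) | v ∈ ℂ, F_c(v) ≤ 1} = F_{−c}(w). In other words, the dual of the triangular Finsler norm F_c with respect to g equals F_{−c}. -/

import Mathlib

/-- The triangular Finsler norm `F_c(v) = max_{α³ = c} 2 Re(α v)`. -/
noncomputable def triF (c : ℂ) (v : ℂ) : ℝ :=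
  sSup {r : ℝ | ∃ α : ℂ, α ^ 3 = c ∧ r = 2 * (α * v).re}

/-- The inner product `g(w,v) = 2 |c|^{2/3} Re(w v̄)` on `ℂ ≅ ℝ²`
(twice the flat metric determined by the cubic differential `c dz³`). -/
noncomputable def triG (c : ℂ) (w v : ℂ) : ℝ :=
  2 * ‖c‖ ^ ((2 : ℝ) / 3) * (w * (starRingEnd ℂ) v).re

/-!
Writing `c = α³`, the substitution `u = α v` turns `F_c`, `g_c` and `F_{-c}` into `F_1`, `g_1` and
`F_{-1}`, so it suffices to treat `c = 1`. The unit ball of `F_1` is the triangle with vertices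
`-ζ̄`, `ζ³ = 1`, and the numbers `(1 - 2 Re(ζ u)) / 3` are the barycentric coordinates of `u` in it:
they are nonnegative on the ball and, because `1 + ω + ω² = 0` and `ζ̄ = ζ²`, they sum to `1` and
reproduce `u`. Hence `u ↦ 2 Re(w ū)` is maximised on the ball at a vertex `-ζ̄`, where it equals
`2 Re(-ζ w)`; the largest of these values is `F_{-1}(w)`.
-/

open Complex ComplexConjugate Polynomial

lemma one_add_add_sq_eq_zero {R : Type*} [CommRing R] [IsDomain R] {ζ : R} (h : ζ ^ 3 = 1)
    (h1 : ζ ≠ 1) : 1 + ζ + ζ ^ 2 = 0 :=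
  mul_left_cancel₀ (sub_ne_zero.2 h1) (by linear_combination h)

namespace Complex

lemma conj_eq_sq_of_pow_three_eq_one {ζ : ℂ} (h : ζ ^ 3 = 1) : conj ζ = ζ ^ 2 := by
  rw [← inv_eq_conj (norm_eq_one_of_pow_eq_one h three_ne_zero)]
  exact inv_eq_of_mul_eq_one_right (by rw [← pow_succ']; exact h)

lemma neg_half_le_re_of_pow_three_eq_one {ζ : ℂ} (h : ζ ^ 3 = 1) : -1 / 2 ≤ ζ.re := by
  rcases eq_or_ne ζ 1 with rfl | h1
  · norm_num
  · have h2re : ((2 * ζ.re : ℝ) : ℂ) = -1 := by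
      rw [← add_conj, conj_eq_sq_of_pow_three_eq_one h]
      linear_combination one_add_add_sq_eq_zero h h1
    have : 2 * ζ.re = -1 := by exact_mod_cast h2re
    linarith

end Complex

lemma isGreatest_triF (c v : ℂ) :
    IsGreatest {r : ℝ | ∃ α : ℂ, α ^ 3 = c ∧ r = 2 * (α * v).re} (triF c v) := by
  have hfin : {r : ℝ | ∃ α : ℂ, α ^ 3 = c ∧ r = 2 * (α * v).re}.Finite := by
    convert (nthRootsFinset 3 c).finite_toSet.image fun α => 2 * (α * v).re using 1
    ext r
    simp [eq_comm]
  obtain ⟨α, hα⟩ := IsAlgClosed.exists_pow_nat_eq c three_pos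
  exact ⟨Set.Nonempty.csSup_mem ⟨_, α, hα, rfl⟩ hfin, fun r hr => le_csSup hfin.bddAbove hr⟩

lemma exists_triF_eq (c v : ℂ) : ∃ α : ℂ, α ^ 3 = c ∧ triF c v = 2 * (α * v).re :=
  (isGreatest_triF c v).1

lemma le_triF {c α : ℂ} (h : α ^ 3 = c) (v : ℂ) : 2 * (α * v).re ≤ triF c v :=
  (isGreatest_triF c v).2 ⟨α, h, rfl⟩

lemma triF_le_iff {c v : ℂ} {r : ℝ} : triF c v ≤ r ↔ ∀ α : ℂ, α ^ 3 = c → 2 * (α * v).re ≤ r := by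
  refine ⟨fun h α hα => (le_triF hα v).trans h, fun h => ?_⟩
  obtain ⟨α, hα, hF⟩ := exists_triF_eq c v
  exact hF ▸ h α hα

lemma triF_mul_cube {a : ℂ} (ha : a ≠ 0) (d v : ℂ) : triF (a ^ 3 * d) v = triF d (a * v) := by
  unfold triF
  congr 1
  ext r
  constructor
  · rintro ⟨β, hβ, rfl⟩
    refine ⟨β / a, ?_, by congr 2; field_simp⟩
    rw [div_pow, hβ, mul_div_cancel_left₀ _ (pow_ne_zero 3 ha)]
  · rintro ⟨γ, hγ, rfl⟩
    exact ⟨a * γ, by rw [mul_pow, hγ], by ring_nf⟩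

lemma triG_mul_cube (a d w v : ℂ) : triG (a ^ 3 * d) w v = triG d (a * w) (a * v) := by
  have hnorm : ‖a ^ 3 * d‖ ^ ((2 : ℝ) / 3) = ‖a‖ ^ 2 * ‖d‖ ^ ((2 : ℝ) / 3) := by
    rw [norm_mul, norm_pow, Real.mul_rpow (by positivity) (norm_nonneg _), ← Real.rpow_natCast,
      ← Real.rpow_mul (norm_nonneg _)]
    norm_num
  have hprod : a * w * conj (a * v) = ((‖a‖ ^ 2 : ℝ) : ℂ) * (w * conj v) := by
    rw [map_mul, ofReal_pow, ← mul_conj']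
    ring
  unfold triG
  rw [hnorm, hprod, re_ofReal_mul]
  ring

lemma triG_one (w v : ℂ) : triG 1 w v = 2 * (w * conj v).re := by
  simp [triG]

/-- The barycentric coordinate of `u` at the vertex `-conj ζ` of the unit ball of `triF 1`. -/
noncomputable def triBary (u ζ : ℂ) : ℝ := (1 - 2 * (ζ * u).re) / 3

lemma triBary_add_add {ω : ℂ} (hω3 : ω ^ 3 = 1) (hω1 : ω ≠ 1) (u : ℂ) :
    triBary u 1 + triBary u ω + triBary u (ω ^ 2) = 1 := by
  have h := congrArg re (show u + ω * u + ω ^ 2 * u = 0 by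
    linear_combination u * one_add_add_sq_eq_zero hω3 hω1)
  simp only [add_re, zero_re] at h
  simp only [triBary, one_mul]
  linarith

lemma conj_eq_neg_sum_triBary {ω : ℂ} (hω3 : ω ^ 3 = 1) (hω1 : ω ≠ 1) (u : ℂ) :
    conj u =
      -((triBary u 1 : ℂ) * 1 + (triBary u ω : ℂ) * ω + (triBary u (ω ^ 2) : ℂ) * ω ^ 2) := by
  simp only [triBary, ofReal_div, ofReal_sub, ofReal_one, ofReal_ofNat, ← add_conj, map_mul,
    map_one, map_pow, conj_eq_sq_of_pow_three_eq_one hω3]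
  linear_combination (1 - u) / 3 * one_add_add_sq_eq_zero hω3 hω1
    - (u * ω + conj u * (ω ^ 3 + 2)) / 3 * hω3

lemma triBary_nonneg {u ζ : ℂ} (hu : triF 1 u ≤ 1) (hζ : ζ ^ 3 = 1) : 0 ≤ triBary u ζ :=
  div_nonneg (sub_nonneg.2 ((le_triF hζ u).trans hu)) zero_le_three

lemma two_re_mul_conj_le_triF_neg_one {u : ℂ} (hu : triF 1 u ≤ 1) (w : ℂ) :
    2 * (w * conj u).re ≤ triF (-1) w := by
  obtain ⟨ω, hω3, hω1⟩ : ∃ ω : ℂ, ω ^ 3 = 1 ∧ ω ≠ 1 :=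
    ⟨_, (isPrimitiveRoot_exp 3 three_ne_zero).pow_eq_one,
      (isPrimitiveRoot_exp 3 three_ne_zero).ne_one (by norm_num)⟩
  have hω2 : (ω ^ 2) ^ 3 = 1 := by rw [← pow_mul, pow_mul', hω3, one_pow]
  have hvertex : ∀ ζ : ℂ, ζ ^ 3 = 1 →
      triBary u ζ * (2 * (-ζ * w).re) ≤ triBary u ζ * triF (-1) w := fun ζ hζ =>
    mul_le_mul_of_nonneg_left (le_triF (by rw [neg_pow, hζ]; norm_num) w) (triBary_nonneg hu hζ)
  have hsplit : 2 * (w * conj u).re = triBary u 1 * (2 * (-1 * w).re)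
      + triBary u ω * (2 * (-ω * w).re) + triBary u (ω ^ 2) * (2 * (-ω ^ 2 * w).re) := by
    have h := congrArg re (congrArg (w * ·) (conj_eq_neg_sum_triBary hω3 hω1 u))
    rw [show w * -((triBary u 1 : ℂ) * 1 + (triBary u ω : ℂ) * ω
        + (triBary u (ω ^ 2) : ℂ) * ω ^ 2) = (triBary u 1 : ℂ) * (-1 * w)
        + (triBary u ω : ℂ) * (-ω * w) + (triBary u (ω ^ 2) : ℂ) * (-ω ^ 2 * w) by ring] at h
    simp only [add_re, re_ofReal_mul] at h
    linear_combination 2 * h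
  have hweights := congrArg (· * triF (-1) w) (triBary_add_add hω3 hω1 u)
  linarith [hvertex 1 (one_pow 3), hvertex ω hω3, hvertex (ω ^ 2) hω2]

lemma triF_one_inv_le_one {β : ℂ} (hβ : β ^ 3 = -1) : triF 1 β⁻¹ ≤ 1 := by
  refine triF_le_iff.2 fun ζ hζ => ?_
  have hcube : (-(ζ * β⁻¹)) ^ 3 = 1 := by
    rw [neg_pow, mul_pow, inv_pow, hζ, hβ]
    norm_num
  have := neg_half_le_re_of_pow_three_eq_one hcube
  rw [neg_re] at this
  linarith

noncomputable def triFDual (c w : ℂ) : ℝ :=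
  sSup {r : ℝ | ∃ v : ℂ, triF c v ≤ 1 ∧ r = triG c w v}

lemma triFDual_mul_cube {a : ℂ} (ha : a ≠ 0) (d w : ℂ) :
    triFDual (a ^ 3 * d) w = triFDual d (a * w) := by
  unfold triFDual
  congr 1
  ext r
  simp only [Set.mem_ofPred_eq, triF_mul_cube ha, triG_mul_cube]
  constructor
  · rintro ⟨v, hv, rfl⟩
    exact ⟨a * v, hv, rfl⟩
  · rintro ⟨u, hu, rfl⟩
    exact ⟨a⁻¹ * u, by rwa [mul_inv_cancel_left₀ ha], by rw [mul_inv_cancel_left₀ ha]⟩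

lemma triFDual_one (w : ℂ) : triFDual 1 w = triF (-1) w := by
  refine IsGreatest.csSup_eq ⟨?_, ?_⟩
  · obtain ⟨β, hβ, hF⟩ := exists_triF_eq (-1) w
    have hnorm : ‖β⁻¹‖ = 1 := by
      have h := congrArg norm hβ
      rw [norm_pow, norm_neg, norm_one, pow_eq_one_iff_of_nonneg (norm_nonneg _) three_ne_zero] at h
      rw [norm_inv, h, inv_one]
    refine ⟨β⁻¹, triF_one_inv_le_one hβ, ?_⟩
    rw [hF, triG_one, ← inv_eq_conj hnorm, inv_inv, mul_comm w]
  · rintro r ⟨u, hu, rfl⟩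
    rw [triG_one]
    exact two_re_mul_conj_le_triF_neg_one hu w

theorem stmt8 (c : ℂ) (hc : c ≠ 0) (w : ℂ) :
    sSup {r : ℝ | ∃ v : ℂ, triF c v ≤ 1 ∧ r = triG c w v} = triF (-c) w := by
  obtain ⟨α, rfl⟩ := IsAlgClosed.exists_pow_nat_eq c three_pos
  have hα : α ≠ 0 := by
    rintro rfl
    simp at hc
  have hdual := triFDual_mul_cube hα 1 w
  rwa [mul_one, triFDual_one, ← triF_mul_cube hα, mul_neg_one] at hdual
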